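/- For t ≥ 3, √(G(2t) + 1) ≤ 1.65·e^{t²/8}, where G is defined by G(d) = [exp(-(e^d-1-d)/(e^d-1)) - 2·exp((d e^d - e^d + 1)/(e^d-1)) + exp((2d e^d - e^d - d + 1)/(e^d-1))]/(d(e^d-1)) - 1. -/

import Mathlib

noncomputable def G (d : ℝ) : ℝ :=
  (Real.exp (-(Real.exp d - 1 - d) / (Real.exp d - 1))
    - 2 * Real.exp ((d * Real.exp d - Real.exp d + 1) / (Real.exp d - 1))
    + Real.exp ((2 * d * Real.exp d - Real.exp d - d + 1) / (Real.exp d - 1)))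
    / (d * (Real.exp d - 1)) - 1

/-!
The three exponents in `G d` differ by multiples of `d`, so `G d + 1 = e^(ε - 1) (e^d - 1) / d`
with `ε = d / (e^d - 1)`. For `d = 2t ≥ 6` we have `ε ≤ 1/51`, hence `e^ε ≤ 1 + 1.02 ε`, and the
claim reduces to `e^(2t) + 2.04 t - 1 ≤ 5.445 t e^(t²/4 + 1)`. Since `t²/4 + 1 = 2t + (t - 4)²/4 - 3`,
this follows from the second-order Taylor lower bounds for `e^(2(t - 3))` and `e^((t - 4)²/4)`,
numerical bounds on `e^3` and `e^6`, and a polynomial inequality in `t`. The bound is tight to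
about 0.2% near `t = 3.4`, which is why the Taylor bounds are of second order.
-/

open Real

theorem exp_le_one_add_mul_of_mul_le {c x : ℝ} (hc : 0 < c) (hx : 0 ≤ x)
    (hcx : c * x ≤ c - 1) : exp x ≤ 1 + c * x := by
  have hx₁ : x < 1 := by nlinarith
  calc exp x ≤ 1 / (1 - x) := exp_bound_div_one_sub_of_interval hx hx₁
    _ ≤ 1 + c * x := by rw [div_le_iff₀ (by linarith)]; nlinarith

theorem exp_div_mul_le {a d : ℝ} (ha : 0 < a) (hd : 0 ≤ d) (h : 51 * d ≤ a) :
    exp (d / a) * a ≤ a + 1.02 * d := by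
  have hexp : exp (d / a) ≤ 1 + 1.02 * (d / a) := by
    refine exp_le_one_add_mul_of_mul_le (by norm_num) (div_nonneg hd ha.le) ?_
    rw [← mul_div_assoc, div_le_iff₀ ha]
    linarith
  calc exp (d / a) * a ≤ (1 + 1.02 * (d / a)) * a := mul_le_mul_of_nonneg_right hexp ha.le
    _ = a + 1.02 * d := by field_simp

theorem lt_exp_six : 403.4287 < exp 6 := by
  calc (403.4287 : ℝ) < 2.7182818283 ^ 6 := by norm_num
    _ < exp 1 ^ 6 := by gcongr; exact exp_one_gt_d9
    _ = exp 6 := by rw [← exp_nat_mul]; norm_num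

theorem exp_three_lt : exp 3 < 20.0856 := by
  calc exp 3 = exp 1 ^ 3 := by rw [← exp_nat_mul]; norm_num
    _ < 2.7182818286 ^ 3 := by gcongr; exact exp_one_lt_d9
    _ < 20.0856 := by norm_num

theorem exp_two_mul_ge (t : ℝ) (ht : 3 ≤ t) :
    403.4287 * (1 + 2 * (t - 3) + 2 * (t - 3) ^ 2) ≤ exp (2 * t) := by
  have htaylor := quadratic_le_exp_of_nonneg (show 0 ≤ 2 * (t - 3) by linarith)
  calc 403.4287 * (1 + 2 * (t - 3) + 2 * (t - 3) ^ 2)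
      ≤ exp 6 * exp (2 * (t - 3)) :=
        mul_le_mul lt_exp_six.le (by linarith) (by positivity) (exp_pos 6).le
    _ = exp (2 * t) := by rw [← exp_add]; ring_nf

theorem exp_two_mul_add_le_taylor {t y : ℝ} (ht : 3 ≤ t)
    (hy : 403.4287 * (1 + 2 * (t - 3) + 2 * (t - 3) ^ 2) ≤ y) :
    y + 2.04 * t - 1 ≤ 5.445 * t * y * (1 + (t - 4) ^ 2 / 4 + (t - 4) ^ 4 / 32) / 20.0856 := by
  have hpos : 0 ≤ 5.445 / 20.0856 * t * (1 + (t - 4) ^ 2 / 4 + (t - 4) ^ 4 / 32) - 1 := by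
    nlinarith [sq_nonneg (t - 4), sq_nonneg ((t - 4) ^ 2), sq_nonneg (t - 37 / 10),
      mul_nonneg (sub_nonneg.2 ht) (sq_nonneg (t - 37 / 10)),
      mul_nonneg (sub_nonneg.2 ht) (sq_nonneg ((t - 4) ^ 2))]
  have hpoly : 2.04 * t - 1 ≤ 403.4287 * (1 + 2 * (t - 3) + 2 * (t - 3) ^ 2) *
      (5.445 / 20.0856 * t * (1 + (t - 4) ^ 2 / 4 + (t - 4) ^ 4 / 32) - 1) := by
    nlinarith [sq_nonneg (t - 3), sq_nonneg ((t - 3) ^ 2 - 2 / 5 * (t - 3)),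
      sq_nonneg (t - 17 / 5), sq_nonneg ((t - 3) ^ 2),
      mul_nonneg (sub_nonneg.2 ht) (sq_nonneg (t - 17 / 5)), sq_nonneg ((t - 3) * (t - 17 / 5)),
      mul_nonneg (mul_nonneg (sub_nonneg.2 ht) (sub_nonneg.2 ht)) (sq_nonneg (t - 17 / 5))]
  linear_combination hpoly.trans (mul_le_mul_of_nonneg_right hy hpos)

theorem exp_two_mul_add_le (t : ℝ) (ht : 3 ≤ t) :
    exp (2 * t) + 2.04 * t - 1 ≤ 5.445 * t * exp (t ^ 2 / 4 + 1) := by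
  have hP : 1 + (t - 4) ^ 2 / 4 + (t - 4) ^ 4 / 32 ≤ exp ((t - 4) ^ 2 / 4) := by
    convert quadratic_le_exp_of_nonneg (show 0 ≤ (t - 4) ^ 2 / 4 by positivity) using 2
    ring
  have hsplit : exp (t ^ 2 / 4 + 1) = exp (2 * t) * exp ((t - 4) ^ 2 / 4) / exp 3 := by
    rw [eq_div_iff (exp_ne_zero 3), ← exp_add, ← exp_add]; ring_nf
  calc exp (2 * t) + 2.04 * t - 1
      ≤ 5.445 * t * exp (2 * t) * (1 + (t - 4) ^ 2 / 4 + (t - 4) ^ 4 / 32) / 20.0856 :=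
        exp_two_mul_add_le_taylor ht (exp_two_mul_ge t ht)
    _ ≤ 5.445 * t * exp (2 * t) * exp ((t - 4) ^ 2 / 4) / exp 3 := by
        gcongr
        exact exp_three_lt.le
    _ = 5.445 * t * exp (t ^ 2 / 4 + 1) := by rw [hsplit]; ring

theorem G_add_one_eq (d : ℝ) :
    G d + 1 = exp (d / (exp d - 1) - 1) * (exp d - 1) / d := by
  rcases eq_or_ne d 0 with rfl | hd
  · simp [G]
  have he : exp d - 1 ≠ 0 := sub_ne_zero.2 (mt (exp_eq_one_iff d).1 hd)
  have h₁ : -(exp d - 1 - d) / (exp d - 1) = d / (exp d - 1) - 1 := by field_simp; ring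
  have h₂ : (d * exp d - exp d + 1) / (exp d - 1) = (d / (exp d - 1) - 1) + d := by
    field_simp; ring
  have h₃ : (2 * d * exp d - exp d - d + 1) / (exp d - 1) = (d / (exp d - 1) - 1) + (d + d) := by
    field_simp; ring
  rw [G, h₁, h₂, h₃, exp_add, exp_add, exp_add]
  field_simp
  ring

theorem G_two_mul_add_one_le (t : ℝ) (ht : 3 ≤ t) : G (2 * t) + 1 ≤ 2.7225 * exp (t ^ 2 / 4) := by
  have hd : 0 < 2 * t := by linarith
  have hy : 51 * (2 * t) ≤ exp (2 * t) - 1 := by nlinarith [exp_two_mul_ge t ht]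
  have hε := exp_div_mul_le (by linarith) hd.le hy
  rw [G_add_one_eq, sub_eq_add_neg, exp_add, exp_neg, div_le_iff₀ hd]
  calc exp (2 * t / (exp (2 * t) - 1)) * (exp 1)⁻¹ * (exp (2 * t) - 1)
      = exp (2 * t / (exp (2 * t) - 1)) * (exp (2 * t) - 1) / exp 1 := by ring
    _ ≤ 5.445 * t * exp (t ^ 2 / 4 + 1) / exp 1 := by
        gcongr ?_ / _
        linarith [exp_two_mul_add_le t ht]
    _ = 2.7225 * exp (t ^ 2 / 4) * (2 * t) := by rw [exp_add]; field_simp; ring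

theorem G_bound_two (t : ℝ) (ht : 3 ≤ t) :
    Real.sqrt (G (2 * t) + 1) ≤ 1.65 * Real.exp (t ^ 2 / 8) := by
  rw [sqrt_le_left (by positivity)]
  calc G (2 * t) + 1 ≤ 2.7225 * exp (t ^ 2 / 4) := G_two_mul_add_one_le t ht
    _ = (1.65 * exp (t ^ 2 / 8)) ^ 2 := by rw [mul_pow, ← exp_nat_mul]; norm_num; ring_nf
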